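/- With z(n) = Σ_{j=0}^n t(j) for the infinite tribonacci word t and A, B, C the position sequences of 1, 0, 2, one has z(A(k)) = 2(A(k) − B(k)) − k − 1, z(B(k)) = −A(k) + 3B(k) − k + 1, and z(C(k)) = B(k) + 2k + 3 for all k ≥ 0. -/

import Mathlib

/-!
Write `t[0,n)` (`tPrefix n`) for the prefix of length `n` of `t`. As `t` is the fixed point
of `σ`, `σ(t[0,n)) = t[0,p n)` with `p n = |σ(t[0,n))|` (`blockStart n`), so `t` is cut into
the blocks `σ(t n)`, the `n`-th one starting at `p n`. Every block starts with its only `0`,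
hence `B k = p k`; the `1` of the block of the `k`-th `0` and the `2` of the block of the `k`-th
`1` give `A k + 1 = p (B k + 1)` and `C k + 1 = p (A k + 1)`. So the prefixes of `t` ending at
`B k`, `A k`, `C k` are `σ(t[0,k)) 0` and its first two images under `σ`. Since `σ` maps the
letter counts `(|w|₀, |w|₁, |w|₂)` to `(|w|, |w|₀, |w|₁)`, the three sums and positions are
linear in `k`, `|t[0,k)|₀` and `|t[0,k)|₁`, and the identities are linear arithmetic.
-/

/-- The tribonacci substitution on letters: 0 ↦ 01, 1 ↦ 02, 2 ↦ 0. -/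
def sigmaW : ℕ → List ℕ
  | 0 => [0, 1]
  | 1 => [0, 2]
  | _ => [0]

/-- The substitution extended to words (concatenation homomorphism). -/
def sigmaL (w : List ℕ) : List ℕ := w.flatMap sigmaW

/-- The infinite tribonacci word t = 0,1,0,2,0,1,0,0,1,0,2,...,
the fixed point of the substitution starting from 0. -/
def t (n : ℕ) : ℕ := (sigmaL^[n + 1] [0]).getD n 0

/-- A(n): position of the (n+1)-st occurrence of the letter 1 in t. -/
noncomputable def A (n : ℕ) : ℕ := Nat.nth (fun k => t k = 1) n

/-- B(n): position of the (n+1)-st occurrence of the letter 0 in t. -/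
noncomputable def B (n : ℕ) : ℕ := Nat.nth (fun k => t k = 0) n

/-- C(n): position of the (n+1)-st occurrence of the letter 2 in t. -/
noncomputable def C (n : ℕ) : ℕ := Nat.nth (fun k => t k = 2) n

open List

lemma sigmaL_append (l₁ l₂ : List ℕ) : sigmaL (l₁ ++ l₂) = sigmaL l₁ ++ sigmaL l₂ :=
  flatMap_append

lemma sigmaL_singleton (x : ℕ) : sigmaL [x] = sigmaW x :=
  flatMap_singleton _ _

lemma sigmaL_cons (x : ℕ) (w : List ℕ) : sigmaL (x :: w) = sigmaW x ++ sigmaL w :=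
  flatMap_cons

lemma length_sigmaL (w : List ℕ) : (sigmaL w).length = w.length + w.count 0 + w.count 1 := by
  induction w with
  | nil => rfl
  | cons x w ih => rcases x with _ | _ | x <;> simp [sigmaL_cons, sigmaW, ih] <;> omega

lemma count_zero_sigmaL (w : List ℕ) : (sigmaL w).count 0 = w.length := by
  induction w with
  | nil => rfl
  | cons x w ih => rcases x with _ | _ | x <;> simp [sigmaL_cons, sigmaW, ih]

lemma count_one_sigmaL (w : List ℕ) : (sigmaL w).count 1 = w.count 0 := by
  induction w with
  | nil => rfl
  | cons x w ih => rcases x with _ | _ | x <;> simp [sigmaL_cons, sigmaW, ih]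

lemma count_two_sigmaL (w : List ℕ) : (sigmaL w).count 2 = w.count 1 := by
  induction w with
  | nil => rfl
  | cons x w ih => rcases x with _ | _ | x <;> simp [sigmaL_cons, sigmaW, ih]

lemma sum_sigmaL (w : List ℕ) : (sigmaL w).sum = w.count 0 + 2 * w.count 1 := by
  induction w with
  | nil => rfl
  | cons x w ih => rcases x with _ | _ | x <;> simp [sigmaL_cons, sigmaW, ih] <;> omega

def sigmaPow (m : ℕ) : List ℕ := sigmaL^[m] [0]

lemma sigmaPow_succ (m : ℕ) : sigmaPow (m + 1) = sigmaL (sigmaPow m) :=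
  Function.iterate_succ_apply' _ _ _

lemma sigmaPow_prefix_succ (m : ℕ) : sigmaPow m <+: sigmaPow (m + 1) := by
  induction m with
  | zero => exact ⟨[1], rfl⟩
  | succ m ih => rw [sigmaPow_succ, sigmaPow_succ (m + 1)]; exact ih.flatMap sigmaW

lemma sigmaPow_prefix_of_le {a b : ℕ} (h : a ≤ b) : sigmaPow a <+: sigmaPow b := by
  induction b, h using Nat.le_induction with
  | base => exact prefix_refl _
  | succ b _ ih => exact ih.trans (sigmaPow_prefix_succ b)

lemma lt_length_sigmaPow (m : ℕ) : m < (sigmaPow m).length := by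
  induction m with
  | zero => simp [sigmaPow]
  | succ m ih =>
    have h0 : 0 ∈ sigmaPow m := (sigmaPow_prefix_of_le m.zero_le).subset (by simp [sigmaPow])
    have := count_pos_iff.2 h0
    rw [sigmaPow_succ, length_sigmaL]
    omega

lemma t_eq_getElem_sigmaPow {j m : ℕ} (hj : j < (sigmaPow m).length) : t j = (sigmaPow m)[j] := by
  have hj' : j < (sigmaPow (j + 1)).length := (lt_length_sigmaPow _).trans' j.lt_succ_self
  change (sigmaPow (j + 1)).getD j 0 = _
  rw [getD_eq_getElem _ _ hj']
  rcases le_total m (j + 1) with h | h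
  · exact ((sigmaPow_prefix_of_le h).getElem hj).symm
  · exact (sigmaPow_prefix_of_le h).getElem hj'

def tPrefix (n : ℕ) : List ℕ := (range n).map t

@[simp]
lemma length_tPrefix (n : ℕ) : (tPrefix n).length = n := by simp [tPrefix]

@[simp]
lemma getElem_tPrefix {n i : ℕ} (h : i < (tPrefix n).length) : (tPrefix n)[i] = t i := by
  simp [tPrefix]

lemma tPrefix_succ (n : ℕ) : tPrefix (n + 1) = tPrefix n ++ [t n] := by
  simp [tPrefix, range_succ]

lemma sum_range_t_eq_sum_tPrefix (n : ℕ) : ∑ j ∈ Finset.range n, (t j : ℤ) = (tPrefix n).sum := by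
  induction n with
  | zero => rfl
  | succ n ih => simp [Finset.sum_range_succ, ih, tPrefix_succ]

lemma tPrefix_eq_take_sigmaPow {n m : ℕ} (h : n ≤ (sigmaPow m).length) :
    tPrefix n = (sigmaPow m).take n :=
  ext_getElem (by simp [h]) fun _ _ h₂ => by
    simpa using t_eq_getElem_sigmaPow (length_take_le' n _ |>.trans_lt' h₂)

lemma eq_tPrefix_of_prefix {l : List ℕ} {m : ℕ} (h : l <+: sigmaPow m) : l = tPrefix l.length := by
  rw [tPrefix_eq_take_sigmaPow h.length_le]
  exact prefix_iff_eq_take.1 h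

def blockStart (n : ℕ) : ℕ := (sigmaL (tPrefix n)).length

lemma tPrefix_blockStart (n : ℕ) : tPrefix (blockStart n) = sigmaL (tPrefix n) := by
  have h : tPrefix n <+: sigmaPow n := by
    rw [tPrefix_eq_take_sigmaPow (lt_length_sigmaPow n).le]
    exact take_prefix _ _
  have h' : sigmaL (tPrefix n) <+: sigmaPow (n + 1) := by
    rw [sigmaPow_succ]
    exact h.flatMap sigmaW
  exact (eq_tPrefix_of_prefix h').symm

lemma blockStart_succ (n : ℕ) : blockStart (n + 1) = blockStart n + (sigmaW (t n)).length := by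
  simp [blockStart, tPrefix_succ, sigmaL_append, sigmaL_singleton]

lemma t_blockStart_add {n j : ℕ} (hj : j < (sigmaW (t n)).length) :
    t (blockStart n + j) = (sigmaW (t n)).getD j 0 := by
  have hblock : tPrefix (blockStart (n + 1)) = tPrefix (blockStart n) ++ sigmaW (t n) := by
    rw [tPrefix_blockStart, tPrefix_blockStart, tPrefix_succ, sigmaL_append, sigmaL_singleton]
  have hlt : blockStart n + j < (tPrefix (blockStart (n + 1))).length := by
    rw [length_tPrefix, blockStart_succ]; omega
  rw [← getElem_tPrefix hlt, getD_eq_getElem _ _ hj]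
  simp [hblock, getElem_append_right]

lemma t_blockStart (n : ℕ) : t (blockStart n) = 0 := by
  have h := t_blockStart_add (n := n) (j := 0)
  rcases hn : t n with _ | _ | _ <;> simpa [hn, sigmaW] using h

lemma t_blockStart_add_one {n : ℕ} (h : t n < 2) : t (blockStart n + 1) = t n + 1 := by
  obtain hn | hn : t n = 0 ∨ t n = 1 := by omega
  all_goals rw [t_blockStart_add (by simp [hn, sigmaW]), hn]; rfl

lemma tPrefix_blockStart_succ (n : ℕ) :
    tPrefix (blockStart n + 1) = sigmaL (tPrefix n) ++ [0] := by
  rw [tPrefix_succ, tPrefix_blockStart, t_blockStart]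

lemma nat_count_t_eq_count_tPrefix (v n : ℕ) :
    Nat.count (fun j => t j = v) n = (tPrefix n).count v := by
  induction n with
  | zero => rfl
  | succ n ih => simp [Nat.count_succ, ih, tPrefix_succ, count_singleton']

lemma nth_t_eq_of_count_tPrefix {v m k : ℕ} (hm : t m = v) (hk : (tPrefix m).count v = k) :
    Nat.nth (fun j => t j = v) k = m := by
  rw [← hk, ← nat_count_t_eq_count_tPrefix]
  exact Nat.nth_count hm

lemma B_eq_blockStart (k : ℕ) : B k = blockStart k :=
  nth_t_eq_of_count_tPrefix (t_blockStart k)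
    (by rw [tPrefix_blockStart, count_zero_sigmaL, length_tPrefix])

lemma t_B (k : ℕ) : t (B k) = 0 := by
  rw [B_eq_blockStart]
  exact t_blockStart k

lemma count_one_tPrefix_blockStart_B_succ (k : ℕ) :
    (tPrefix (blockStart (B k) + 1)).count 1 = k := by
  simp [tPrefix_blockStart_succ, count_one_sigmaL, B_eq_blockStart, tPrefix_blockStart,
    count_zero_sigmaL]

lemma A_eq_blockStart_B_succ (k : ℕ) : A k = blockStart (B k) + 1 :=
  nth_t_eq_of_count_tPrefix (by rw [t_blockStart_add_one (by rw [t_B]; omega), t_B])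
    (count_one_tPrefix_blockStart_B_succ k)

lemma t_A (k : ℕ) : t (A k) = 1 := by
  rw [A_eq_blockStart_B_succ, t_blockStart_add_one (by rw [t_B]; omega), t_B]

lemma C_eq_blockStart_A_succ (k : ℕ) : C k = blockStart (A k) + 1 :=
  nth_t_eq_of_count_tPrefix (by rw [t_blockStart_add_one (by rw [t_A]; omega), t_A])
    (by rw [tPrefix_blockStart_succ, count_append, count_two_sigmaL, A_eq_blockStart_B_succ,
      count_one_tPrefix_blockStart_B_succ]; rfl)

lemma A_succ_eq_blockStart (k : ℕ) : A k + 1 = blockStart (B k + 1) := by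
  rw [blockStart_succ, t_B, A_eq_blockStart_B_succ]; rfl

lemma C_succ_eq_blockStart (k : ℕ) : C k + 1 = blockStart (A k + 1) := by
  rw [blockStart_succ, t_A, C_eq_blockStart_A_succ]; rfl

/-- z(A(k)) = 2(A(k) − B(k)) − k − 1, z(B(k)) = −A(k) + 3B(k) − k + 1, and
z(C(k)) = B(k) + 2k + 3, where z(n) = Σ_{j=0}^{n} t(j). -/
theorem z_compositions (k : ℕ) :
    (∑ j ∈ Finset.range (A k + 1), (t j : ℤ)) = 2 * ((A k : ℤ) - B k) - k - 1 ∧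
    (∑ j ∈ Finset.range (B k + 1), (t j : ℤ)) = -(A k : ℤ) + 3 * B k - k + 1 ∧
    (∑ j ∈ Finset.range (C k + 1), (t j : ℤ)) = (B k : ℤ) + 2 * k + 3 := by
  have hB : tPrefix (B k + 1) = sigmaL (tPrefix k) ++ [0] := by
    rw [B_eq_blockStart, tPrefix_blockStart_succ]
  have hA : tPrefix (A k + 1) = sigmaL (sigmaL (tPrefix k) ++ [0]) := by
    rw [A_succ_eq_blockStart, tPrefix_blockStart, hB]
  have hC : tPrefix (C k + 1) = sigmaL (sigmaL (sigmaL (tPrefix k) ++ [0])) := by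
    rw [C_succ_eq_blockStart, tPrefix_blockStart, hA]
  have lB := length_tPrefix (B k + 1)
  have lA := length_tPrefix (A k + 1)
  rw [hB] at lB
  rw [hA] at lA
  simp only [sum_range_t_eq_sum_tPrefix, hA, hB, hC]
  simp [sigmaL_append, length_sigmaL, sum_sigmaL, count_zero_sigmaL, count_one_sigmaL,
    sigmaL_singleton, sigmaW] at lA lB ⊢
  omega
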